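/- arXiv:2510.01657 — 2 statements merged into one kernel-verified Lean document; each statement's English description precedes it below -/
import Mathlib

section
/- Let n ≥ 1 and G ∈ 𝒢_n. For k ∈ {0,…,2n+1}, let C(k) be the set of vertices of G at graph distance k from source. Then the sets C(0),…,C(2n+1) partition the vertex set, |C(k)| = 2^k for 0 ≤ k ≤ n, |C(k)| = 2^{2n+1−k} for n+1 ≤ k ≤ 2n+1, and target is the unique vertex of C(2n+1); in particular the distance from source to target is 2n+1. -/
open Finset

noncomputable section

/-- Vertices of a complete binary tree of height `n`: a level `k ≤ n` and an index below `2^k`. -/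
abbrev TV (n : ℕ) : Type := Σ k : Fin (n+1), Fin (2^(k : ℕ))

/-- Adjacency in a complete binary tree: one vertex is the parent of the other. -/
def treeAdj (n : ℕ) (a b : TV n) : Prop :=
  ((a.1 : ℕ) + 1 = (b.1 : ℕ) ∧ (b.2 : ℕ) / 2 = (a.2 : ℕ)) ∨
  ((b.1 : ℕ) + 1 = (a.1 : ℕ) ∧ (a.2 : ℕ) / 2 = (b.2 : ℕ))

instance (n : ℕ) (a b : TV n) : Decidable (treeAdj n a b) := by
  unfold treeAdj; infer_instance

lemma treeAdj_symm (n : ℕ) : Symmetric (treeAdj n) := by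
  intro a b h; unfold treeAdj at *; tauto

lemma treeAdj_irrefl (n : ℕ) (a : TV n) : ¬ treeAdj n a a := by
  unfold treeAdj; omega

/-- Vertices of a welded-trees graph: disjoint union of the two trees. -/
abbrev WTV (n : ℕ) : Type := TV n ⊕ TV n

def wtRoot (n : ℕ) : TV n := ⟨⟨0, Nat.succ_pos n⟩, ⟨0, by norm_num⟩⟩

/-- The root of the left tree. -/
def wtSource (n : ℕ) : WTV n := Sum.inl (wtRoot n)

/-- The root of the right tree. -/
def wtTarget (n : ℕ) : WTV n := Sum.inr (wtRoot n)

instance (n : ℕ) : Inhabited (WTV n) := ⟨wtSource n⟩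

/-- The index (among the `2^n` leaves of its tree) of a leaf. -/
def leafIdx {n : ℕ} (a : TV n) : Fin (2^n) := ⟨(a.2 : ℕ) % 2^n, Nat.mod_lt _ (by positivity)⟩

/-- Adjacency in the welded trees graph determined by the welding data `W`
(`W i j = true` iff the `i`-th left leaf is welded to the `j`-th right leaf). -/
def weldedAdj (n : ℕ) (W : Fin (2^n) → Fin (2^n) → Bool) : WTV n → WTV n → Prop
  | Sum.inl a, Sum.inl b => treeAdj n a b
  | Sum.inr a, Sum.inr b => treeAdj n a b
  | Sum.inl a, Sum.inr b => (a.1 : ℕ) = n ∧ (b.1 : ℕ) = n ∧ W (leafIdx a) (leafIdx b) = true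
  | Sum.inr b, Sum.inl a => (a.1 : ℕ) = n ∧ (b.1 : ℕ) = n ∧ W (leafIdx a) (leafIdx b) = true

/-- The welded trees graph determined by the welding data `W`. -/
def weldedGraph (n : ℕ) (W : Fin (2^n) → Fin (2^n) → Bool) : SimpleGraph (WTV n) where
  Adj := weldedAdj n W
  symm := by
    constructor
    rintro (a|a) (b|b) h
    · exact treeAdj_symm n h
    · exact h
    · exact h
    · exact treeAdj_symm n h
  loopless := by
    constructor
    rintro (a|a) h
    · exact treeAdj_irrefl n a h
    · exact treeAdj_irrefl n a h

instance (n : ℕ) (W : Fin (2^n) → Fin (2^n) → Bool) : DecidableRel (weldedGraph n W).Adj := by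
  rintro (a|a) (b|b)
  · exact inferInstanceAs (Decidable (treeAdj n a b))
  · exact inferInstanceAs (Decidable ((a.1 : ℕ) = n ∧ (b.1 : ℕ) = n ∧ W (leafIdx a) (leafIdx b) = true))
  · exact inferInstanceAs (Decidable ((b.1 : ℕ) = n ∧ (a.1 : ℕ) = n ∧ W (leafIdx b) (leafIdx a) = true))
  · exact inferInstanceAs (Decidable (treeAdj n a b))

/-- The index of the column of a vertex: its distance to `source`. -/
def colIdx (n : ℕ) (W : Fin (2^n) → Fin (2^n) → Bool) (v : WTV n) : ℕ :=
  (weldedGraph n W).dist (wtSource n) v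

/-- The `k`-th column: vertices at distance `k` from `source`. -/
def column (n : ℕ) (W : Fin (2^n) → Fin (2^n) → Bool) (k : ℕ) : Set (WTV n) :=
  {v | colIdx n W v = k}

/-- The bipartite graph on the leaves of the two trees given by the welding edges. -/
def weldGraphLeaves (n : ℕ) (W : Fin (2^n) → Fin (2^n) → Bool) :
    SimpleGraph (Fin (2^n) ⊕ Fin (2^n)) where
  Adj x y := (∃ i j, x = Sum.inl i ∧ y = Sum.inr j ∧ W i j = true) ∨
             (∃ i j, x = Sum.inr j ∧ y = Sum.inl i ∧ W i j = true)
  symm := by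
    constructor
    rintro x y (⟨i, j, hx, hy, h⟩ | ⟨i, j, hx, hy, h⟩)
    · exact Or.inr ⟨i, j, hy, hx, h⟩
    · exact Or.inl ⟨i, j, hy, hx, h⟩
  loopless := by
    constructor
    rintro x (⟨i, j, hx, hy, h⟩ | ⟨i, j, hx, hy, h⟩) <;> subst hx <;> simp_all

/-- `W` is a valid welding datum: every leaf is welded to exactly two leaves of the other
tree, and the welding edges form a single cycle (equivalently, the 2-regular bipartite
welding graph on the `2^{n+1}` leaves is connected). -/
def IsWeldedData (n : ℕ) (W : Fin (2^n) → Fin (2^n) → Bool) : Prop :=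
  (∀ i : Fin (2^n), (univ.filter (fun j => W i j = true)).card = 2) ∧
  (∀ j : Fin (2^n), (univ.filter (fun i => W i j = true)).card = 2) ∧
  (weldGraphLeaves n W).Connected


/-!
Call the level of a vertex its depth in the left tree, or `2n+1` minus its depth in the right
tree. Adjacent vertices have levels differing by one, so the distance from `source` is at least
the level. Conversely every vertex is reached by a walk of exactly its level: down the left tree
to a leaf welded to some leaf below the vertex in the right tree, across, and up. So the columns
are the level sets, and these are copies of the levels of a binary tree.
-/

open SimpleGraph

variable {n : ℕ}

def treeGraph (n : ℕ) : SimpleGraph (TV n) where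
  Adj := treeAdj n
  symm := ⟨@treeAdj_symm n⟩
  loopless := ⟨treeAdj_irrefl n⟩

lemma treeGraph.adj_of_parent {a b : TV n} (hlevel : (a.1 : ℕ) + 1 = b.1)
    (hidx : (b.2 : ℕ) / 2 = a.2) : (treeGraph n).Adj a b :=
  Or.inl ⟨hlevel, hidx⟩

lemma treeGraph.exists_walk_from_root (a : TV n) :
    ∃ p : (treeGraph n).Walk (wtRoot n) a, p.length = a.1 := by
  obtain ⟨⟨k, hk⟩, i⟩ := a
  induction k with
  | zero =>
    obtain ⟨_ | m, hm⟩ := i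
    · exact ⟨.nil, rfl⟩
    · exact absurd hm (by simp)
  | succ k ih =>
    have hi : (i : ℕ) / 2 < 2 ^ k := by
      have : (i : ℕ) < 2 ^ (k + 1) := i.isLt
      have := pow_succ 2 k; omega
    obtain ⟨p, hp⟩ := ih (by omega) ⟨i / 2, hi⟩
    exact ⟨p.concat (treeGraph.adj_of_parent rfl rfl), by rw [Walk.length_concat, hp]⟩

lemma treeGraph.exists_walk_to_leaf (a : TV n) :
    ∃ (b : TV n) (p : (treeGraph n).Walk a b), (b.1 : ℕ) = n ∧ p.length = n - a.1 := by
  obtain ⟨⟨k, hk⟩, i⟩ := a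
  induction h : n - k generalizing k with
  | zero => exact ⟨_, .nil, by simp only; omega, Walk.length_nil⟩
  | succ d ih =>
    have hi : 2 * (i : ℕ) < 2 ^ (k + 1) := by
      have : (i : ℕ) < 2 ^ k := i.isLt
      have := pow_succ 2 k; omega
    obtain ⟨b, p, hb, hp⟩ := ih (k + 1) (by omega) ⟨2 * i, hi⟩ (by omega)
    exact ⟨b, .cons (treeGraph.adj_of_parent rfl (by simp)) p, hb, by rw [Walk.length_cons, hp]⟩

def weldedLevel (n : ℕ) : WTV n → ℕ
  | Sum.inl a => a.1
  | Sum.inr a => 2*n+1 - a.1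

lemma weldedLevel_le (v : WTV n) : weldedLevel n v ≤ 2*n+1 := by
  rcases v with a | a <;> simp only [weldedLevel] <;> omega

section

variable {W : Fin (2^n) → Fin (2^n) → Bool}

lemma weldedGraph.exists_walk_inl {a b : TV n} (p : (treeGraph n).Walk a b) :
    ∃ q : (weldedGraph n W).Walk (Sum.inl a) (Sum.inl b), q.length = p.length :=
  ⟨p.map ⟨Sum.inl, id⟩, Walk.length_map _ _⟩

lemma weldedGraph.exists_walk_inr {a b : TV n} (p : (treeGraph n).Walk a b) :
    ∃ q : (weldedGraph n W).Walk (Sum.inr a) (Sum.inr b), q.length = p.length :=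
  ⟨p.map ⟨Sum.inr, id⟩, Walk.length_map _ _⟩

lemma weldedLevel_le_of_adj {u v : WTV n} (h : (weldedGraph n W).Adj u v) :
    weldedLevel n v ≤ weldedLevel n u + 1 := by
  rcases u with ⟨⟨k, hk⟩, i⟩ | ⟨⟨k, hk⟩, i⟩ <;> rcases v with ⟨⟨l, hl⟩, j⟩ | ⟨⟨l, hl⟩, j⟩ <;>
    simp only [weldedGraph, weldedAdj, treeAdj, weldedLevel] at h ⊢ <;> omega

lemma weldedLevel_le_length {u v : WTV n} (p : (weldedGraph n W).Walk u v) :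
    weldedLevel n v ≤ weldedLevel n u + p.length := by
  induction p with
  | nil => simp
  | cons h _ ih =>
    have := weldedLevel_le_of_adj h
    rw [Walk.length_cons]
    omega

lemma exists_walk_source_length_eq_weldedLevel (hW : ∀ j, ∃ i, W i j = true) (v : WTV n) :
    ∃ p : (weldedGraph n W).Walk (wtSource n) v, p.length = weldedLevel n v := by
  rcases v with a | a
  · obtain ⟨p, hp⟩ := treeGraph.exists_walk_from_root a
    obtain ⟨q, hq⟩ := weldedGraph.exists_walk_inl (W := W) p
    exact ⟨q, hq.trans hp⟩
  · obtain ⟨b, up, hb, hup⟩ := treeGraph.exists_walk_to_leaf a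
    obtain ⟨i, hi⟩ := hW (leafIdx b)
    let c : TV n := ⟨Fin.last n, i⟩
    obtain ⟨down, hdown⟩ := treeGraph.exists_walk_from_root c
    obtain ⟨down', hdown'⟩ : ∃ q : (weldedGraph n W).Walk (wtSource n) (Sum.inl c),
        q.length = down.length := weldedGraph.exists_walk_inl down
    obtain ⟨up', hup'⟩ := weldedGraph.exists_walk_inr (W := W) up.reverse
    have hweld : (weldedGraph n W).Adj (Sum.inl c) (Sum.inr b) :=
      ⟨rfl, hb, by rwa [show leafIdx c = i from Fin.ext (Nat.mod_eq_of_lt i.isLt)]⟩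
    refine ⟨down'.append (.cons hweld up'), ?_⟩
    have := a.1.isLt
    rw [Walk.length_append, Walk.length_cons, hdown', hup', Walk.length_reverse, hdown, hup]
    simp only [weldedLevel, c, Fin.val_last]
    omega

lemma dist_source_eq_weldedLevel (hW : ∀ j, ∃ i, W i j = true) (v : WTV n) :
    (weldedGraph n W).dist (wtSource n) v = weldedLevel n v := by
  obtain ⟨p, hp⟩ := exists_walk_source_length_eq_weldedLevel hW v
  obtain ⟨q, hq⟩ := Reachable.exists_walk_length_eq_dist ⟨p⟩
  have := weldedLevel_le_length q
  refine le_antisymm (hp ▸ dist_le p) ?_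
  rw [← hq]
  simpa [wtSource, wtRoot, weldedLevel] using this

lemma column_eq_preimage_weldedLevel (hW : ∀ j, ∃ i, W i j = true) (k : ℕ) :
    column n W k = weldedLevel n ⁻¹' {k} := by
  ext v
  exact iff_of_eq (congrArg (· = k) (dist_source_eq_weldedLevel hW v))

end

lemma IsWeldedData.exists_welded_left_leaf {W : Fin (2^n) → Fin (2^n) → Bool}
    (hW : IsWeldedData n W) (j : Fin (2^n)) : ∃ i, W i j = true := by
  obtain ⟨i, hi⟩ := Finset.card_pos.1 ((hW.2.1 j).symm ▸ two_pos)
  exact ⟨i, (Finset.mem_filter.1 hi).2⟩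

lemma ncard_setOf_level_eq {k : ℕ} (hk : k ≤ n) : {a : TV n | (a.1 : ℕ) = k}.ncard = 2^k := by
  have hrange : {a : TV n | (a.1 : ℕ) = k} =
      Set.range (Sigma.mk (β := fun l : Fin (n+1) => Fin (2^(l : ℕ))) ⟨k, by omega⟩) := by
    ext ⟨⟨l, hl⟩, i⟩
    constructor
    · rintro (rfl : l = k); exact ⟨i, rfl⟩
    · rintro ⟨j, hj⟩; cases hj; rfl
  rw [hrange, Set.ncard_range_of_injective sigma_mk_injective, Nat.card_eq_fintype_card,
    Fintype.card_fin]

lemma weldedLevel_preimage_of_le {k : ℕ} (hk : k ≤ n) :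
    weldedLevel n ⁻¹' {k} = Sum.inl '' {a : TV n | (a.1 : ℕ) = k} := by
  ext (a | a)
  · simp [weldedLevel]
  · have := a.1.isLt
    simp only [Set.mem_preimage, Set.mem_singleton_iff, weldedLevel, Set.mem_image,
      reduceCtorEq, and_false, exists_false, iff_false]
    omega

lemma weldedLevel_preimage_of_lt {k : ℕ} (hk₁ : n < k) (hk₂ : k ≤ 2*n+1) :
    weldedLevel n ⁻¹' {k} = Sum.inr '' {a : TV n | (a.1 : ℕ) = 2*n+1-k} := by
  ext (a | a)
  · have := a.1.isLt
    simp only [Set.mem_preimage, Set.mem_singleton_iff, weldedLevel, Set.mem_image,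
      reduceCtorEq, and_false, exists_false, iff_false]
    omega
  · simp only [Set.mem_preimage, Set.mem_singleton_iff, weldedLevel, Set.mem_image,
      Sum.inr.injEq, exists_eq_right]
    show 2*n+1 - _ = k ↔ _ = _
    omega

theorem welded_trees_columns_general (n : ℕ)
    (W : Fin (2^n) → Fin (2^n) → Bool) (hW : IsWeldedData n W) :
    (∀ v : WTV n, ∃! k : ℕ, k ≤ 2*n+1 ∧ v ∈ column n W k) ∧
    (∀ k : ℕ, k ≤ n → (column n W k).ncard = 2^k) ∧
    (∀ k : ℕ, n+1 ≤ k → k ≤ 2*n+1 → (column n W k).ncard = 2^(2*n+1-k)) ∧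
    column n W (2*n+1) = {wtTarget n} ∧
    (weldedGraph n W).dist (wtSource n) (wtTarget n) = 2*n+1 := by
  have hdist := dist_source_eq_weldedLevel hW.exists_welded_left_leaf
  have hcol := column_eq_preimage_weldedLevel hW.exists_welded_left_leaf
  have hleft (k : ℕ) (hk : k ≤ n) : (column n W k).ncard = 2^k := by
    rw [hcol, weldedLevel_preimage_of_le hk, Set.ncard_image_of_injective _ Sum.inl_injective,
      ncard_setOf_level_eq hk]
  have hright (k : ℕ) (hk₁ : n+1 ≤ k) (hk₂ : k ≤ 2*n+1) :
      (column n W k).ncard = 2^(2*n+1-k) := by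
    rw [hcol, weldedLevel_preimage_of_lt hk₁ hk₂,
      Set.ncard_image_of_injective _ Sum.inr_injective, ncard_setOf_level_eq (by omega)]
  have htarget : weldedLevel n (wtTarget n) = 2*n+1 := rfl
  refine ⟨fun v => ⟨colIdx n W v, ⟨?_, rfl⟩, fun k hk => hk.2.symm⟩, hleft, hright, ?_,
    (hdist _).trans htarget⟩
  · exact (hdist v).trans_le (weldedLevel_le v)
  · obtain ⟨x, hx⟩ := Set.ncard_eq_one.1 ((hright _ (by omega) le_rfl).trans (by simp))
    have hmem : wtTarget n ∈ column n W (2*n+1) := by rw [hcol]; exact htarget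
    rw [hx, Set.mem_singleton_iff] at hmem
    rw [hx, hmem]

/-- For `n ≥ 1` and `G ∈ 𝒢_n`, the columns `C(0), …, C(2n+1)` partition
the vertex set, `|C(k)| = 2^k` for `0 ≤ k ≤ n`, `|C(k)| = 2^{2n+1-k}` for
`n+1 ≤ k ≤ 2n+1`, and `target` is the unique vertex of `C(2n+1)`; in particular the
distance from `source` to `target` is `2n+1`. -/
theorem welded_trees_columns (n : ℕ) (hn : 1 ≤ n)
    (W : Fin (2^n) → Fin (2^n) → Bool) (hW : IsWeldedData n W) :
    (∀ v : WTV n, ∃! k : ℕ, k ≤ 2*n+1 ∧ v ∈ column n W k) ∧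
    (∀ k : ℕ, k ≤ n → (column n W k).ncard = 2^k) ∧
    (∀ k : ℕ, n+1 ≤ k → k ≤ 2*n+1 → (column n W k).ncard = 2^(2*n+1-k)) ∧
    column n W (2*n+1) = {wtTarget n} ∧
    (weldedGraph n W).dist (wtSource n) (wtTarget n) = 2*n+1 :=
  welded_trees_columns_general n W hW
end
end

section
/- Let n ≥ 1 and G ∈ 𝒢_n, with columns C(0),…,C(2n+1) defined by distance from source. Then every edge of G joins two consecutive columns, and for every k and every vertex v ∈ C(k): if k = 0 then v has 0 neighbors in the previous column and 2 in C(1); if 1 ≤ k ≤ n then v has exactly 1 neighbor in C(k−1) and exactly 2 neighbors in C(k+1); if n+1 ≤ k ≤ 2n then v has exactly 2 neighbors in C(k−1) and exactly 1 neighbor in C(k+1); if k = 2n+1 then v has exactly 2 neighbors in C(2n) and 0 in any later column. In particular, the number of neighbors that a vertex of C(k) has in each adjacent column depends only on k. -/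
open Finset

/-!
Give every vertex a level: its depth in the left tree, or `2n+1` minus its depth in the right
tree. Levels of adjacent vertices differ by one, and every vertex other than `source` has a
neighbour one level lower (its parent on the left; a child, or a welded partner at the leaves,
on the right), so the level is exactly the distance from `source` and the columns are the
levels. The neighbour counts are then read off the tree structure; the right tree reduces to
the left one through the isomorphism that swaps the two trees and transposes the welding.
-/

namespace TV

variable {n : ℕ}

lemma ext' {a b : TV n} (h₁ : (a.1 : ℕ) = b.1) (h₂ : (a.2 : ℕ) = b.2) : a = b := by
  obtain ⟨⟨k, _⟩, ⟨i, _⟩⟩ := a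
  obtain ⟨⟨l, _⟩, ⟨j, _⟩⟩ := b
  dsimp only at h₁ h₂
  subst h₁ h₂
  rfl

def child (a : TV n) (h : (a.1 : ℕ) < n) (c : Fin 2) : TV n :=
  ⟨⟨a.1 + 1, by omega⟩, ⟨2 * a.2 + c, by
    show 2 * (a.2 : ℕ) + c < 2 ^ ((a.1 : ℕ) + 1)
    have := a.2.isLt; have := c.isLt; rw [pow_succ]; omega⟩⟩

/-- The parent of a vertex; the root is its own parent. -/
def parent (a : TV n) : TV n :=
  ⟨⟨a.1 - 1, by omega⟩, ⟨a.2 / 2, by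
    show (a.2 : ℕ) / 2 < 2 ^ ((a.1 : ℕ) - 1)
    refine Nat.div_lt_of_lt_mul (a.2.isLt.trans_le ?_)
    rw [← pow_succ']
    exact Nat.pow_le_pow_right two_pos (by omega)⟩⟩

def leaf (i : Fin (2 ^ n)) : TV n := ⟨Fin.last n, i⟩

lemma child_injective (a : TV n) (h : (a.1 : ℕ) < n) : Function.Injective (a.child h) := by
  intro c d hcd
  have := congrArg (fun b : TV n => (b.2 : ℕ)) hcd
  simp only [child] at this
  omega

lemma leaf_injective : Function.Injective (leaf (n := n)) := by
  intro i j hij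
  simpa [leaf] using hij

@[simp] lemma leafIdx_leaf (i : Fin (2 ^ n)) : leafIdx (leaf i) = i :=
  Fin.ext (Nat.mod_eq_of_lt i.isLt)

lemma leaf_leafIdx {a : TV n} (h : (a.1 : ℕ) = n) : leaf (leafIdx a) = a := by
  refine ext' h.symm ?_
  show (a.2 : ℕ) % 2 ^ n = a.2
  exact Nat.mod_eq_of_lt (a.2.isLt.trans_eq (by rw [h]))

lemma treeAdj_and_succ_iff {a b : TV n} (h : (a.1 : ℕ) < n) :
    treeAdj n a b ∧ (b.1 : ℕ) = a.1 + 1 ↔ b ∈ Set.range (a.child h) := by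
  constructor
  · rintro ⟨⟨-, hb⟩ | ⟨hb, -⟩, hlev⟩
    · refine ⟨⟨b.2 % 2, Nat.mod_lt _ two_pos⟩, ext' hlev.symm ?_⟩
      simp only [child]
      omega
    · omega
  · rintro ⟨c, rfl⟩
    have := c.isLt
    exact ⟨Or.inl ⟨rfl, by simp only [child]; omega⟩, rfl⟩

lemma treeAdj_and_pred_iff {a b : TV n} (h : 1 ≤ (a.1 : ℕ)) :
    treeAdj n a b ∧ (b.1 : ℕ) + 1 = a.1 ↔ b = a.parent := by
  constructor
  · rintro ⟨⟨hb, -⟩ | ⟨-, hb⟩, hlev⟩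
    · omega
    · exact ext' (by simp only [parent]; omega) hb.symm
  · rintro rfl
    exact ⟨Or.inr ⟨by simp only [parent]; omega, rfl⟩, by simp only [parent]; omega⟩

end TV

section WeldedTrees

variable {n : ℕ} {W : Fin (2 ^ n) → Fin (2 ^ n) → Bool}

def level (n : ℕ) : WTV n → ℕ
  | .inl a => a.1
  | .inr a => 2 * n + 1 - a.1

def levelSet (n k : ℕ) : Set (WTV n) := {v | level n v = k}

@[simp] lemma mem_levelSet {v : WTV n} {k : ℕ} : v ∈ levelSet n k ↔ level n v = k := Iff.rfl

lemma level_le (v : WTV n) : level n v ≤ 2 * n + 1 := by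
  rcases v with a | a <;> simp only [level] <;> omega

lemma le_level_inr (a : TV n) : n + 1 ≤ level n (.inr a) := by
  simp only [level]; omega

lemma level_eq_zero_iff {v : WTV n} : level n v = 0 ↔ v = wtSource n := by
  constructor
  · rcases v with ⟨⟨k, hk⟩, ⟨i, hi⟩⟩ | a <;> intro h
    · simp only [level] at h
      subst h
      obtain rfl : i = 0 := by simpa using hi
      rfl
    · have := le_level_inr a; omega
  · rintro rfl; rfl

lemma level_swap (v : WTV n) : level n v.swap = 2 * n + 1 - level n v := by
  rcases v with a | a
  · rfl
  · simp only [level, Sum.swap_inr]; omega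

lemma level_adj {u v : WTV n} (h : (weldedGraph n W).Adj u v) :
    level n v = level n u + 1 ∨ level n u = level n v + 1 := by
  have := level_le u
  have := level_le v
  rcases u with a | a <;> rcases v with b | b <;> simp only [level] at * <;>
    first
    | (rcases h with ⟨h, -⟩ | ⟨h, -⟩ <;> omega)
    | (obtain ⟨h₁, h₂, -⟩ := h; omega)

lemma level_le_level_add_length {u v : WTV n} (p : (weldedGraph n W).Walk u v) :
    level n v ≤ level n u + p.length := by
  induction p with
  | nil => simp
  | cons h _ ih =>
    rcases level_adj h with h | h <;> simp only [SimpleGraph.Walk.length_cons] <;> omega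

lemma levelSet_eq_empty {k : ℕ} (hk : 2 * n + 1 < k) : levelSet n k = ∅ :=
  Set.eq_empty_of_forall_notMem fun v hv => by
    have := level_le v
    rw [mem_levelSet] at hv
    omega

lemma neighborSet_inter_levelSet_level (v : WTV n) :
    (weldedGraph n W).neighborSet v ∩ levelSet n (level n v) = ∅ :=
  Set.eq_empty_of_forall_notMem fun u ⟨hu, hlev⟩ => by
    have := level_adj hu; simp_all

lemma weldedGraph_adj_swap {u v : WTV n} :
    (weldedGraph n W).Adj u.swap v.swap ↔ (weldedGraph n (Function.swap W)).Adj u v := by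
  rcases u with a | a <;> rcases v with b | b <;>
    simp only [Sum.swap_inl, Sum.swap_inr, weldedGraph, weldedAdj, Function.swap] <;> tauto

lemma ncard_neighborSet_inr_inter_levelSet (a : TV n) {k : ℕ} (hk : k ≤ 2 * n + 1) :
    ((weldedGraph n W).neighborSet (.inr a) ∩ levelSet n k).ncard =
      ((weldedGraph n (Function.swap W)).neighborSet (.inl a) ∩
        levelSet n (2 * n + 1 - k)).ncard := by
  rw [← Set.ncard_image_of_injective _ Sum.swap_leftInverse.injective,
    Set.image_eq_preimage_of_inverse Sum.swap_leftInverse Sum.swap_leftInverse]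
  congr 1
  ext u
  have := level_le u
  simp only [Set.mem_inter_iff, SimpleGraph.mem_neighborSet, mem_levelSet, Set.mem_preimage,
    ← weldedGraph_adj_swap, Sum.swap_inl, level_swap]
  exact and_congr_right fun _ => by omega

lemma neighborSet_inl_inter_levelSet_pred (a : TV n) (ha : 1 ≤ (a.1 : ℕ)) :
    (weldedGraph n W).neighborSet (.inl a) ∩ levelSet n (level n (.inl a) - 1) =
      {.inl a.parent} := by
  ext (b | b)
  · simp only [Set.mem_inter_iff, SimpleGraph.mem_neighborSet, mem_levelSet,
      Set.mem_singleton_iff, Sum.inl.injEq, ← TV.treeAdj_and_pred_iff ha]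
    exact and_congr_right fun _ => by simp only [level]; omega
  · have := le_level_inr b
    have := a.1.isLt
    simp only [level] at this ⊢
    simp only [Set.mem_inter_iff, mem_levelSet, Set.mem_singleton_iff, reduceCtorEq, iff_false]
    omega

lemma neighborSet_inl_inter_levelSet_succ_of_lt (a : TV n) (ha : (a.1 : ℕ) < n) :
    (weldedGraph n W).neighborSet (.inl a) ∩ levelSet n (level n (.inl a) + 1) =
      Sum.inl '' Set.range (a.child ha) := by
  ext (b | b)
  · simp only [Set.mem_inter_iff, SimpleGraph.mem_neighborSet, mem_levelSet,
      Sum.inl_injective.mem_set_image, ← TV.treeAdj_and_succ_iff ha]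
    exact and_congr_right fun _ => Iff.rfl
  · simp only [Set.mem_inter_iff, SimpleGraph.mem_neighborSet, mem_levelSet, Set.mem_image,
      reduceCtorEq, and_false, exists_false, iff_false]
    rintro ⟨⟨ha', -⟩, -⟩
    omega

lemma neighborSet_inl_inter_levelSet_succ_of_eq (a : TV n) (ha : (a.1 : ℕ) = n) :
    (weldedGraph n W).neighborSet (.inl a) ∩ levelSet n (level n (.inl a) + 1) =
      (Sum.inr ∘ TV.leaf) '' {j | W (leafIdx a) j = true} := by
  ext (b | b)
  · simp only [Set.mem_inter_iff, SimpleGraph.mem_neighborSet, mem_levelSet, Set.mem_image,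
      Function.comp_apply, reduceCtorEq, and_false, exists_false, iff_false]
    rintro ⟨-, hb⟩
    have := b.1.isLt
    simp only [level] at hb
    omega
  · constructor
    · rintro ⟨⟨-, hb, hweld⟩, -⟩
      exact ⟨leafIdx b, hweld, by rw [Function.comp_apply, TV.leaf_leafIdx hb]⟩
    · rintro ⟨j, hj, hjb⟩
      obtain rfl := Sum.inr_injective hjb
      refine ⟨⟨ha, rfl, by simpa using hj⟩, ?_⟩
      simp only [mem_levelSet, level, TV.leaf, Fin.val_last]
      omega

lemma ncard_neighborSet_inl_inter_levelSet_pred (a : TV n) (ha : 1 ≤ (a.1 : ℕ)) :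
    ((weldedGraph n W).neighborSet (.inl a) ∩ levelSet n (level n (.inl a) - 1)).ncard = 1 := by
  rw [neighborSet_inl_inter_levelSet_pred a ha, Set.ncard_singleton]

lemma ncard_neighborSet_inl_inter_levelSet_succ
    (hrow : ∀ i : Fin (2 ^ n), (univ.filter fun j => W i j = true).card = 2) (a : TV n) :
    ((weldedGraph n W).neighborSet (.inl a) ∩ levelSet n (level n (.inl a) + 1)).ncard = 2 := by
  rcases (Nat.lt_succ_iff.mp a.1.isLt).lt_or_eq with ha | ha
  · rw [neighborSet_inl_inter_levelSet_succ_of_lt a ha,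
      Set.ncard_image_of_injective _ Sum.inl_injective,
      Set.ncard_range_of_injective (a.child_injective ha), Nat.card_eq_fintype_card,
      Fintype.card_fin]
  · rw [neighborSet_inl_inter_levelSet_succ_of_eq a ha,
      Set.ncard_image_of_injective _ (Sum.inr_injective.comp TV.leaf_injective),
      ← Finset.coe_filter_univ, Set.ncard_coe_finset]
    exact hrow (leafIdx a)

lemma ncard_neighborSet_inr_inter_levelSet_pred
    (hcol : ∀ j : Fin (2 ^ n), (univ.filter fun i => W i j = true).card = 2) (a : TV n) :
    ((weldedGraph n W).neighborSet (.inr a) ∩ levelSet n (level n (.inr a) - 1)).ncard = 2 := by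
  have := a.1.isLt
  rw [ncard_neighborSet_inr_inter_levelSet a (by simp only [level]; omega),
    show 2 * n + 1 - (level n (.inr a) - 1) = level n (.inl a) + 1 by simp only [level]; omega]
  exact ncard_neighborSet_inl_inter_levelSet_succ hcol a

lemma ncard_neighborSet_inr_inter_levelSet_succ (a : TV n) (ha : 1 ≤ (a.1 : ℕ)) :
    ((weldedGraph n W).neighborSet (.inr a) ∩ levelSet n (level n (.inr a) + 1)).ncard = 1 := by
  have := a.1.isLt
  rw [ncard_neighborSet_inr_inter_levelSet a (by simp only [level]; omega),
    show 2 * n + 1 - (level n (.inr a) + 1) = level n (.inl a) - 1 by simp only [level]; omega]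
  exact ncard_neighborSet_inl_inter_levelSet_pred a ha

lemma exists_adj_level_pred
    (hcol : ∀ j : Fin (2 ^ n), (univ.filter fun i => W i j = true).card = 2) {v : WTV n}
    (hv : level n v ≠ 0) : ∃ u, (weldedGraph n W).Adj v u ∧ level n u + 1 = level n v := by
  suffices ((weldedGraph n W).neighborSet v ∩ levelSet n (level n v - 1)).Nonempty by
    obtain ⟨u, hu, hlev⟩ := this
    exact ⟨u, hu, by rw [mem_levelSet] at hlev; omega⟩
  apply Set.nonempty_of_ncard_ne_zero
  rcases v with a | a
  · rw [ncard_neighborSet_inl_inter_levelSet_pred a (Nat.one_le_iff_ne_zero.mpr hv)]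
    exact one_ne_zero
  · rw [ncard_neighborSet_inr_inter_levelSet_pred hcol a]
    exact two_ne_zero

lemma exists_walk_length_eq_level
    (hcol : ∀ j : Fin (2 ^ n), (univ.filter fun i => W i j = true).card = 2) (v : WTV n) :
    ∃ p : (weldedGraph n W).Walk (wtSource n) v, p.length = level n v := by
  induction hk : level n v generalizing v with
  | zero =>
    obtain rfl := level_eq_zero_iff.mp hk
    exact ⟨.nil, rfl⟩
  | succ k ih =>
    obtain ⟨u, hvu, hu⟩ := exists_adj_level_pred hcol (v := v) (by omega)
    obtain ⟨p, hp⟩ := ih u (by omega)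
    exact ⟨p.concat hvu.symm, by rw [SimpleGraph.Walk.length_concat, hp]⟩

lemma colIdx_eq_level
    (hcol : ∀ j : Fin (2 ^ n), (univ.filter fun i => W i j = true).card = 2) :
    colIdx n W = level n := by
  funext v
  obtain ⟨p, hp⟩ := exists_walk_length_eq_level hcol v
  obtain ⟨q, hq⟩ := (SimpleGraph.Walk.reachable p).exists_walk_length_eq_dist
  refine le_antisymm (hp ▸ SimpleGraph.dist_le p) ?_
  simpa [colIdx, hq, level_eq_zero_iff.mpr rfl] using level_le_level_add_length q

lemma column_eq_levelSet
    (hcol : ∀ j : Fin (2 ^ n), (univ.filter fun i => W i j = true).card = 2) (k : ℕ) :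
    column n W k = levelSet n k := by
  simp only [column, levelSet, colIdx_eq_level hcol]

end WeldedTrees

theorem welded_trees_edges_between_columns_general (n : ℕ)
    (W : Fin (2^n) → Fin (2^n) → Bool) (hW : IsWeldedData n W) :
    (∀ u v : WTV n, (weldedGraph n W).Adj u v →
      colIdx n W v = colIdx n W u + 1 ∨ colIdx n W u = colIdx n W v + 1) ∧
    (∀ (k : ℕ) (v : WTV n), v ∈ column n W k →
      (k = 0 →
        ((weldedGraph n W).neighborSet v ∩ column n W 0).ncard = 0 ∧
        ((weldedGraph n W).neighborSet v ∩ column n W 1).ncard = 2) ∧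
      (1 ≤ k → k ≤ n →
        ((weldedGraph n W).neighborSet v ∩ column n W (k-1)).ncard = 1 ∧
        ((weldedGraph n W).neighborSet v ∩ column n W (k+1)).ncard = 2) ∧
      (n+1 ≤ k → k ≤ 2*n →
        ((weldedGraph n W).neighborSet v ∩ column n W (k-1)).ncard = 2 ∧
        ((weldedGraph n W).neighborSet v ∩ column n W (k+1)).ncard = 1) ∧
      (k = 2*n+1 →
        ((weldedGraph n W).neighborSet v ∩ column n W (2*n)).ncard = 2 ∧
        (∀ j : ℕ, 2*n+1 < j → (weldedGraph n W).neighborSet v ∩ column n W j = ∅))) := by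
  obtain ⟨hrow, hcol, -⟩ := hW
  simp only [column_eq_levelSet hcol, colIdx_eq_level hcol]
  refine ⟨fun u v => level_adj, ?_⟩
  rintro k v rfl
  rcases v with a | a
  · have := a.1.isLt
    have hlevel : level n (.inl a) = a.1 := rfl
    refine ⟨fun h => ⟨?_, ?_⟩, fun h _ => ⟨ncard_neighborSet_inl_inter_levelSet_pred a h,
      ncard_neighborSet_inl_inter_levelSet_succ hrow a⟩, by omega, by omega⟩
    · have := neighborSet_inter_levelSet_level (W := W) (.inl a)
      rw [h] at this
      rw [this, Set.ncard_empty]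
    · simpa only [h, zero_add] using ncard_neighborSet_inl_inter_levelSet_succ hrow a
  · have := le_level_inr a
    have hlevel : level n (.inr a) = 2 * n + 1 - a.1 := rfl
    refine ⟨by omega, by omega, fun _ h => ⟨ncard_neighborSet_inr_inter_levelSet_pred hcol a,
      ncard_neighborSet_inr_inter_levelSet_succ a (by omega)⟩, fun h => ⟨?_, ?_⟩⟩
    · simpa only [h, Nat.add_sub_cancel] using ncard_neighborSet_inr_inter_levelSet_pred hcol a
    · intro j hj
      rw [levelSet_eq_empty hj, Set.inter_empty]

/-- In a welded-trees graph, every edge joins two consecutive columns,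
and the number of neighbors that a vertex of `C(k)` has in each adjacent column depends
only on `k`: a vertex of `C(0) = {source}` has `0` neighbors in the previous column and
`2` in `C(1)`; a vertex of `C(k)` with `1 ≤ k ≤ n` has exactly `1` neighbor in `C(k-1)`
and `2` in `C(k+1)`; a vertex of `C(k)` with `n+1 ≤ k ≤ 2n` has exactly `2` neighbors in
`C(k-1)` and `1` in `C(k+1)`; and a vertex of `C(2n+1) = {target}` has exactly `2`
neighbors in `C(2n)` and `0` in any later column. -/
theorem welded_trees_edges_between_columns (n : ℕ) (hn : 1 ≤ n)
    (W : Fin (2^n) → Fin (2^n) → Bool) (hW : IsWeldedData n W) :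
    (∀ u v : WTV n, (weldedGraph n W).Adj u v →
      colIdx n W v = colIdx n W u + 1 ∨ colIdx n W u = colIdx n W v + 1) ∧
    (∀ (k : ℕ) (v : WTV n), v ∈ column n W k →
      (k = 0 →
        ((weldedGraph n W).neighborSet v ∩ column n W 0).ncard = 0 ∧
        ((weldedGraph n W).neighborSet v ∩ column n W 1).ncard = 2) ∧
      (1 ≤ k → k ≤ n →
        ((weldedGraph n W).neighborSet v ∩ column n W (k-1)).ncard = 1 ∧
        ((weldedGraph n W).neighborSet v ∩ column n W (k+1)).ncard = 2) ∧
      (n+1 ≤ k → k ≤ 2*n →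
        ((weldedGraph n W).neighborSet v ∩ column n W (k-1)).ncard = 2 ∧
        ((weldedGraph n W).neighborSet v ∩ column n W (k+1)).ncard = 1) ∧
      (k = 2*n+1 →
        ((weldedGraph n W).neighborSet v ∩ column n W (2*n)).ncard = 2 ∧
        (∀ j : ℕ, 2*n+1 < j → (weldedGraph n W).neighborSet v ∩ column n W j = ∅))) :=
  welded_trees_edges_between_columns_general n W hW
end
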